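/- Let (A, Δ_A) be an anti-flexible coalgebra and V a vector space with linear maps ρ: V→A⊗V (ρ(x) = x[-1]⊗x[0]), γ: V→V⊗A (γ(x) = x[0]⊗x[1]), Q: V→A⊗A (Q(x) = x{1}⊗x{2}) and Δ_V: V→V⊗V (Δ_V(x) = x1⊗x2). Define on E = A⊕V the comultiplication Δ_E(a) = Δ_A(a) and Δ_E(x) = Δ_V(x) + ρ(x) + γ(x) + Q(x). Then (E, Δ_E) is an anti-flexible coalgebra if and only if for all x in V: (D1) ρ(x1)⊗x2 − x[-1]⊗Δ_V(x[0]) = τ13(Δ_V(x[0])⊗x[1] − x1⊗γ(x2)); (D2) D := γ(x1)⊗x2 − x1⊗ρ(x2) satisfies D = τ13(D); (D3) Δ_A(x[-1])⊗x[0] + Q(x1)⊗x2 − x[-1]⊗ρ(x[0]) = τ13(γ(x[0])⊗x[1] − x[0]⊗Δ_A(x[1]) − x1⊗Q(x2)); (D4) D := ρ(x[0])⊗x[1] − x[-1]⊗γ(x[0]) satisfies D = τ13(D); (D5) D := Δ_A(x{1})⊗x{2} − x{1}⊗Δ_A(x{2}) + Q(x[0])⊗x[1] − x[-1]⊗Q(x[0])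 satisfies D = τ13(D); (D6) D := Δ_V(x1)⊗x2 − x1⊗Δ_V(x2) satisfies D = τ13(D). -/

import Mathlib

open TensorProduct LinearMap

namespace AntiFlexible

section Basic

variable (K : Type*) [Field K] [CharZero K]
variable (M N P : Type*)
variable [AddCommGroup M] [Module K M] [AddCommGroup N] [Module K N] [AddCommGroup P] [Module K P]

/-- The flip map `τ : M ⊗ N → N ⊗ M`. -/
noncomputable def τ : M ⊗[K] N →ₗ[K] N ⊗[K] M := (TensorProduct.comm K M N).toLinearMap

/-- `τ₁₃ : (M ⊗ N) ⊗ P → (P ⊗ N) ⊗ M`, exchanging the outer tensor factors. -/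
noncomputable def τ₁₃ : (M ⊗[K] N) ⊗[K] P →ₗ[K] (P ⊗[K] N) ⊗[K] M :=
  (TensorProduct.assoc K P N M).symm.toLinearMap ∘ₗ
    (lTensor P (τ K M N)) ∘ₗ (TensorProduct.comm K (M ⊗[K] N) P).toLinearMap

/-- The reassociator `M ⊗ (N ⊗ P) → (M ⊗ N) ⊗ P`. -/
noncomputable def α : M ⊗[K] (N ⊗[K] P) →ₗ[K] (M ⊗[K] N) ⊗[K] P :=
  (TensorProduct.assoc K M N P).symm.toLinearMap

/-- The antisymmetrizer `id - τ` on `M ⊗ M`. -/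
noncomputable def ω : M ⊗[K] M →ₗ[K] M ⊗[K] M := LinearMap.id - τ K M M

end Basic

section Structures

variable {K : Type*} [Field K] [CharZero K]
variable {A H V : Type*}
variable [AddCommGroup A] [Module K A] [AddCommGroup H] [Module K H]
variable [AddCommGroup V] [Module K V]

/-- Anti-flexible algebra: `(ab)c - a(bc) = (cb)a - c(ba)`. -/
def IsAFAlgebra (m : A →ₗ[K] A →ₗ[K] A) : Prop :=
  ∀ a b c, m (m a b) c - m a (m b c) = m (m c b) a - m c (m b a)

/-- The coassociativity defect `(Δ ⊗ id)Δ - (id ⊗ Δ)Δ`, viewed in `(A ⊗ A) ⊗ A`. -/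
noncomputable def coassocDefect (Δ : A →ₗ[K] A ⊗[K] A) : A →ₗ[K] (A ⊗[K] A) ⊗[K] A :=
  (rTensor A Δ) ∘ₗ Δ - (α K A A A) ∘ₗ (lTensor A Δ) ∘ₗ Δ

/-- Anti-flexible coalgebra: the coassociativity defect is `τ₁₃`-invariant. -/
def IsAFCoalgebra (Δ : A →ₗ[K] A ⊗[K] A) : Prop :=
  ∀ a, coassocDefect Δ a = τ₁₃ K A A A (coassocDefect Δ a)

/-- Anti-flexible bialgebra. -/
def IsAFBialgebra (m : A →ₗ[K] A →ₗ[K] A) (Δ : A →ₗ[K] A ⊗[K] A) : Prop :=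
  IsAFAlgebra m ∧ IsAFCoalgebra Δ ∧
  (∀ a b, Δ (m a b) + τ K A A (Δ (m b a)) =
      rTensor A (m b) (τ K A A (Δ a)) + lTensor A (m.flip a) (τ K A A (Δ b))
      + rTensor A (m.flip b) (Δ a) + lTensor A (m a) (Δ b)) ∧
  (∀ a b, ω K A (lTensor A (m.flip b) (Δ a) - rTensor A (m b) (Δ a)
      - lTensor A (m.flip a) (Δ b) + rTensor A (m a) (Δ b)) = 0)

/-- `V` is a bimodule over the anti-flexible algebra `(H, m)` via `tr = ▷` and `tl = ◁`. -/
def IsAFBimodule (m : H →ₗ[K] H →ₗ[K] H)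
    (tr : H →ₗ[K] V →ₗ[K] V) (tl : V →ₗ[K] H →ₗ[K] V) : Prop :=
  (∀ x y v, tr (m x y) v - tr x (tr y v) = tl (tl v y) x - tl v (m y x)) ∧
  (∀ x y v, tl (tr x v) y - tr x (tl v y) = tl (tr y v) x - tr y (tl v x))

/-- `V` is a bicomodule over the anti-flexible coalgebra `(H, Δ)` via `φ` and `ψ`. -/
def IsAFBicomodule (Δ : H →ₗ[K] H ⊗[K] H)
    (φ : V →ₗ[K] H ⊗[K] V) (ψ : V →ₗ[K] V ⊗[K] H) : Prop :=
  (∀ v, rTensor V Δ (φ v) - α K H H V (lTensor H φ (φ v))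
      = τ₁₃ K V H H (rTensor H ψ (ψ v) - α K V H H (lTensor V Δ (ψ v)))) ∧
  (∀ v, rTensor H φ (ψ v) - α K H V H (lTensor H ψ (φ v))
      = τ₁₃ K H V H (rTensor H φ (ψ v) - α K H V H (lTensor H ψ (φ v))))

/-- Anti-flexible Hopf bimodule over `(H, m, Δ)`, with conditions (HM1)-(HM3). -/
def IsAFHopfBimodule (m : H →ₗ[K] H →ₗ[K] H) (Δ : H →ₗ[K] H ⊗[K] H)
    (tr : H →ₗ[K] V →ₗ[K] V) (tl : V →ₗ[K] H →ₗ[K] V)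
    (φ : V →ₗ[K] H ⊗[K] V) (ψ : V →ₗ[K] V ⊗[K] H) : Prop :=
  IsAFBimodule m tr tl ∧ IsAFBicomodule Δ φ ψ ∧
  -- (HM1)
  (∀ x v, φ (tr x v) + τ K V H (ψ (tl v x))
      = lTensor H (tr x) (φ v) + lTensor H (tl.flip x) (τ K V H (ψ v))) ∧
  -- (HM2)
  (∀ x v, ψ (tr x v) + τ K H V (φ (tl v x))
      = rTensor H (tr.flip v) (Δ x) + lTensor V (m x) (ψ v)
      + lTensor V (m.flip x) (τ K H V (φ v)) + rTensor H (tl v) (τ K H H (Δ x))) ∧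
  -- (HM3)
  (∀ x v, rTensor H (tr x) (ψ v) - rTensor H (tl v) (Δ x) - lTensor V (m.flip x) (ψ v)
      = τ K H V (- lTensor H (tl.flip x) (φ v) + rTensor V (m x) (φ v)
        + lTensor H (tr.flip v) (Δ x)))

/-- `A` is a braided anti-flexible bialgebra over `(H, mH, ΔH)`:
an anti-flexible algebra and coalgebra in the category of anti-flexible Hopf bimodules,
satisfying (BB1) and (BB2). -/
def IsBraidedAFBialgebra (mA : A →ₗ[K] A →ₗ[K] A) (ΔA : A →ₗ[K] A ⊗[K] A)
    (mH : H →ₗ[K] H →ₗ[K] H) (ΔH : H →ₗ[K] H ⊗[K] H)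
    (tr : H →ₗ[K] A →ₗ[K] A) (tl : A →ₗ[K] H →ₗ[K] A)
    (φ : A →ₗ[K] H ⊗[K] A) (ψ : A →ₗ[K] A ⊗[K] H) : Prop :=
  IsAFAlgebra mA ∧ IsAFCoalgebra ΔA ∧
  IsAFHopfBimodule mH ΔH tr tl φ ψ ∧
  -- H-bimodule algebra
  (∀ x a b, mA (tr x a) b - tr x (mA a b) = tl (mA b a) x - mA b (tl a x)) ∧
  (∀ x a b, mA a (tr x b) - mA (tl a x) b = mA b (tr x a) - mA (tl b x) a) ∧
  -- H-bimodule coalgebra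
  (∀ x b, ΔA (tr x b) + τ K A A (ΔA (tl b x))
      = lTensor A (tl.flip x) (τ K A A (ΔA b)) + lTensor A (tr x) (ΔA b)) ∧
  (∀ x b, ω K A (rTensor A (tr x) (ΔA b) - lTensor A (tl.flip x) (ΔA b)) = 0) ∧
  -- H-bicomodule algebra
  (∀ a b, φ (mA a b) + τ K A H (ψ (mA b a))
      = lTensor H (mA a) (φ b) + lTensor H (mA.flip a) (τ K A H (ψ b))) ∧
  (∀ a b, lTensor H (mA.flip b) (φ a) - lTensor H (mA.flip a) (φ b)
      = τ K A H (rTensor H (mA a) (ψ b) - rTensor H (mA b) (ψ a))) ∧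
  -- H-bicomodule coalgebra
  (∀ a, rTensor A φ (ΔA a) - α K H A A (lTensor H ΔA (φ a))
      = τ₁₃ K A A H (rTensor H ΔA (ψ a) - α K A A H (lTensor A ψ (ΔA a)))) ∧
  (∀ a, rTensor A ψ (ΔA a) - α K A H A (lTensor A φ (ΔA a))
      = τ₁₃ K A H A (rTensor A ψ (ΔA a) - α K A H A (lTensor A φ (ΔA a)))) ∧
  -- (BB1)
  (∀ a b, ΔA (mA a b) + τ K A A (ΔA (mA b a))
      = rTensor A (mA.flip b) (ΔA a) + rTensor A (mA b) (τ K A A (ΔA a))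
      + lTensor A (mA a) (ΔA b) + lTensor A (mA.flip a) (τ K A A (ΔA b))
      + rTensor A (tr.flip b) (φ a) + rTensor A (tl b) (τ K A H (ψ a))
      + lTensor A (tl a) (ψ b) + lTensor A (tr.flip a) (τ K H A (φ b))) ∧
  -- (BB2)
  (∀ a b, ω K A (lTensor A (mA.flip b) (ΔA a) - rTensor A (mA b) (ΔA a)
        - lTensor A (mA.flip a) (ΔA b) + rTensor A (mA a) (ΔA b))
      + ω K A (lTensor A (tr.flip b) (ψ a) - rTensor A (tl b) (φ a)
        - lTensor A (tr.flip a) (ψ b) + rTensor A (tl a) (φ b)) = 0)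

/-- The (cocycle) cross product multiplication on `A × H`:
`(a,x)(b,y) = (ab + x⇀b + a↼y + σ(x,y), xy + x◁b + a▷y + θ(a,b))`,
where `tr = ⇀`, `tl = ↼`, `sr = ▷`, `sl = ◁`. -/
noncomputable def prodMul (mA : A →ₗ[K] A →ₗ[K] A) (mH : H →ₗ[K] H →ₗ[K] H)
    (tr : H →ₗ[K] A →ₗ[K] A) (tl : A →ₗ[K] H →ₗ[K] A)
    (sr : A →ₗ[K] H →ₗ[K] H) (sl : H →ₗ[K] A →ₗ[K] H)
    (σ : H →ₗ[K] H →ₗ[K] A) (θ : A →ₗ[K] A →ₗ[K] H) :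
    (A × H) →ₗ[K] (A × H) →ₗ[K] (A × H) :=
  ((mA ∘ₗ fst K A H).compl₂ (fst K A H) + (tr ∘ₗ snd K A H).compl₂ (fst K A H)
    + (tl ∘ₗ fst K A H).compl₂ (snd K A H)
    + (σ ∘ₗ snd K A H).compl₂ (snd K A H)).compr₂ (inl K A H)
  + ((mH ∘ₗ snd K A H).compl₂ (snd K A H) + (sl ∘ₗ snd K A H).compl₂ (fst K A H)
    + (sr ∘ₗ fst K A H).compl₂ (snd K A H)
    + (θ ∘ₗ fst K A H).compl₂ (fst K A H)).compr₂ (inr K A H)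

/-- The (cycle) cross coproduct comultiplication on `A × H`:
`Δ(a) = Δ_A(a) + φ(a) + ψ(a) + P(a)` and `Δ(x) = Δ_H(x) + ρ(x) + γ(x) + Q(x)`. -/
noncomputable def prodComul (ΔA : A →ₗ[K] A ⊗[K] A) (ΔH : H →ₗ[K] H ⊗[K] H)
    (φ : A →ₗ[K] H ⊗[K] A) (ψ : A →ₗ[K] A ⊗[K] H)
    (ρ : H →ₗ[K] A ⊗[K] H) (γ : H →ₗ[K] H ⊗[K] A)
    (P : A →ₗ[K] H ⊗[K] H) (Q : H →ₗ[K] A ⊗[K] A) :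
    (A × H) →ₗ[K] (A × H) ⊗[K] (A × H) :=
  (TensorProduct.map (inl K A H) (inl K A H)) ∘ₗ ΔA ∘ₗ fst K A H
  + (TensorProduct.map (inr K A H) (inl K A H)) ∘ₗ φ ∘ₗ fst K A H
  + (TensorProduct.map (inl K A H) (inr K A H)) ∘ₗ ψ ∘ₗ fst K A H
  + (TensorProduct.map (inr K A H) (inr K A H)) ∘ₗ P ∘ₗ fst K A H
  + (TensorProduct.map (inr K A H) (inr K A H)) ∘ₗ ΔH ∘ₗ snd K A H
  + (TensorProduct.map (inl K A H) (inr K A H)) ∘ₗ ρ ∘ₗ snd K A H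
  + (TensorProduct.map (inr K A H) (inl K A H)) ∘ₗ γ ∘ₗ snd K A H
  + (TensorProduct.map (inl K A H) (inl K A H)) ∘ₗ Q ∘ₗ snd K A H

/-- The linear map `(a, x) ↦ (a + r(x), s(x))` on `A × V`. -/
noncomputable def phiRS (r : V →ₗ[K] A) (s : V →ₗ[K] V) : (A × V) →ₗ[K] (A × V) :=
  (fst K A V + r ∘ₗ snd K A V).prod (s ∘ₗ snd K A V)

end Structures

end AntiFlexible

open AntiFlexible

/-! The cube `(A ⊕ V)^{⊗3}` splits into eight blocks according to the summand each factor
comes from, and `τ₁₃` permutes the blocks by reversing this word. Since `A` is a subcoalgebra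
of `E`, the defect of `Δ_E` on `A` is the defect of `Δ_A`, which is `τ₁₃`-invariant, so only
the defect on `V` has to be tested. Its eight blocks are the expressions in (D1)-(D6): the
palindromic blocks `AAA`, `AVA`, `VAV`, `VVV` give (D5), (D4), (D2), (D6), and each of the
pairs `AAV`/`VAA` and `AVV`/`VVA` gives a single condition, (D3) and (D1), the other equation
of the pair being its image under the involution `τ₁₃`. -/

namespace AntiFlexible

variable {K : Type*} [Field K]

section Naturality

variable {M N P M' N' P' : Type*}
variable [AddCommGroup M] [Module K M] [AddCommGroup N] [Module K N] [AddCommGroup P] [Module K P]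
variable [AddCommGroup M'] [Module K M'] [AddCommGroup N'] [Module K N']
variable [AddCommGroup P'] [Module K P']

theorem τ₁₃_map (f : M →ₗ[K] M') (g : N →ₗ[K] N') (h : P →ₗ[K] P') (u : (M ⊗[K] N) ⊗[K] P) :
    τ₁₃ K M' N' P' (map (map f g) h u) = map (map h g) f (τ₁₃ K M N P u) :=
  LinearMap.congr_fun (TensorProduct.ext_threefold
    (g := τ₁₃ K M' N' P' ∘ₗ map (map f g) h) (h := map (map h g) f ∘ₗ τ₁₃ K M N P)
    fun _ _ _ => rfl) u

theorem τ₁₃_τ₁₃ (u : (M ⊗[K] N) ⊗[K] P) : τ₁₃ K P N M (τ₁₃ K M N P u) = u :=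
  LinearMap.congr_fun (TensorProduct.ext_threefold
    (g := τ₁₃ K P N M ∘ₗ τ₁₃ K M N P) (h := LinearMap.id) fun _ _ _ => rfl) u

theorem α_map (f : M →ₗ[K] M') (g : N →ₗ[K] N') (h : P →ₗ[K] P') (u : M ⊗[K] (N ⊗[K] P)) :
    α K M' N' P' (map f (map g h) u) = map (map f g) h (α K M N P u) :=
  (TensorProduct.map_map_assoc_symm f g h u).symm

theorem coassocDefect_apply {B : Type*} [AddCommGroup B] [Module K B] (Δ : B →ₗ[K] B ⊗[K] B)
    (b : B) : coassocDefect Δ b = rTensor B Δ (Δ b) - α K B B B (lTensor B Δ (Δ b)) :=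
  rfl

theorem coassocDefect_comp_of_comp_eq {B C : Type*} [AddCommGroup B] [Module K B]
    [AddCommGroup C] [Module K C] {ΔB : B →ₗ[K] B ⊗[K] B} {ΔC : C →ₗ[K] C ⊗[K] C}
    {f : B →ₗ[K] C} (hf : ΔC ∘ₗ f = map f f ∘ₗ ΔB) :
    coassocDefect ΔC ∘ₗ f = map (map f f) f ∘ₗ coassocDefect ΔB := by
  ext b
  have hb : ΔC (f b) = map f f (ΔB b) := LinearMap.congr_fun hf b
  simp only [LinearMap.comp_apply, coassocDefect_apply, hb, rTensor_map,
    lTensor_map, hf, map_sub, ← map_rTensor, ← map_lTensor, α_map]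

end Naturality

theorem isAFCoalgebra_iff_of_comp_inl {A V : Type*} [AddCommGroup A] [Module K A]
    [AddCommGroup V] [Module K V] {ΔA : A →ₗ[K] A ⊗[K] A} {Δ : A × V →ₗ[K] (A × V) ⊗[K] (A × V)}
    (hinl : Δ ∘ₗ inl K A V = map (inl K A V) (inl K A V) ∘ₗ ΔA) (hA : IsAFCoalgebra ΔA) :
    IsAFCoalgebra Δ ↔ ∀ x : V, coassocDefect Δ (inr K A V x)
      = τ₁₃ K _ _ _ (coassocDefect Δ (inr K A V x)) := by
  refine ⟨fun h x => h _, fun h z => ?_⟩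
  have hdefect (a : A) : coassocDefect Δ (inl K A V a)
      = map (map (inl K A V) (inl K A V)) (inl K A V) (coassocDefect ΔA a) :=
    LinearMap.congr_fun (coassocDefect_comp_of_comp_eq hinl) a
  obtain ⟨a, x⟩ := z
  rw [show (a, x) = inl K A V a + inr K A V x by simp, map_add, map_add, hdefect, τ₁₃_map,
    ← hA, ← h]

section Blocks

variable {M N : Type*} [AddCommGroup M] [Module K M] [AddCommGroup N] [Module K N]

noncomputable def blockSum (u₁ : (M ⊗[K] M) ⊗[K] M) (u₂ : (M ⊗[K] M) ⊗[K] N)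
    (u₃ : (M ⊗[K] N) ⊗[K] M) (u₄ : (M ⊗[K] N) ⊗[K] N) (u₅ : (N ⊗[K] M) ⊗[K] M)
    (u₆ : (N ⊗[K] M) ⊗[K] N) (u₇ : (N ⊗[K] N) ⊗[K] M) (u₈ : (N ⊗[K] N) ⊗[K] N) :
    ((M × N) ⊗[K] (M × N)) ⊗[K] (M × N) :=
  map (map (inl K M N) (inl K M N)) (inl K M N) u₁
    + map (map (inl K M N) (inl K M N)) (inr K M N) u₂
    + map (map (inl K M N) (inr K M N)) (inl K M N) u₃
    + map (map (inl K M N) (inr K M N)) (inr K M N) u₄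
    + map (map (inr K M N) (inl K M N)) (inl K M N) u₅
    + map (map (inr K M N) (inl K M N)) (inr K M N) u₆
    + map (map (inr K M N) (inr K M N)) (inl K M N) u₇
    + map (map (inr K M N) (inr K M N)) (inr K M N) u₈

variable (u₁ : (M ⊗[K] M) ⊗[K] M) (u₂ : (M ⊗[K] M) ⊗[K] N)
    (u₃ : (M ⊗[K] N) ⊗[K] M) (u₄ : (M ⊗[K] N) ⊗[K] N) (u₅ : (N ⊗[K] M) ⊗[K] M)
    (u₆ : (N ⊗[K] M) ⊗[K] N) (u₇ : (N ⊗[K] N) ⊗[K] M) (u₈ : (N ⊗[K] N) ⊗[K] N)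

theorem τ₁₃_blockSum :
    τ₁₃ K _ _ _ (blockSum u₁ u₂ u₃ u₄ u₅ u₆ u₇ u₈)
      = blockSum (τ₁₃ K _ _ _ u₁) (τ₁₃ K _ _ _ u₅) (τ₁₃ K _ _ _ u₃) (τ₁₃ K _ _ _ u₇)
          (τ₁₃ K _ _ _ u₂) (τ₁₃ K _ _ _ u₆) (τ₁₃ K _ _ _ u₄) (τ₁₃ K _ _ _ u₈) := by
  simp only [blockSum, map_add, τ₁₃_map]
  abel

theorem blockSum_eq_τ₁₃_iff :
    blockSum u₁ u₂ u₃ u₄ u₅ u₆ u₇ u₈ = τ₁₃ K _ _ _ (blockSum u₁ u₂ u₃ u₄ u₅ u₆ u₇ u₈) ↔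
      u₁ = τ₁₃ K _ _ _ u₁ ∧ u₂ = τ₁₃ K _ _ _ u₅ ∧ u₃ = τ₁₃ K _ _ _ u₃ ∧
        u₄ = τ₁₃ K _ _ _ u₇ ∧ u₆ = τ₁₃ K _ _ _ u₆ ∧ u₈ = τ₁₃ K _ _ _ u₈ := by
  rw [τ₁₃_blockSum]
  constructor
  · intro h
    refine ⟨?_, ?_, ?_, ?_, ?_, ?_⟩
    · simpa [blockSum, TensorProduct.map_map, ← TensorProduct.map_comp] using
        congr(map (map (fst K M N) (fst K M N)) (fst K M N) $h)
    · simpa [blockSum, TensorProduct.map_map, ← TensorProduct.map_comp] using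
        congr(map (map (fst K M N) (fst K M N)) (snd K M N) $h)
    · simpa [blockSum, TensorProduct.map_map, ← TensorProduct.map_comp] using
        congr(map (map (fst K M N) (snd K M N)) (fst K M N) $h)
    · simpa [blockSum, TensorProduct.map_map, ← TensorProduct.map_comp] using
        congr(map (map (fst K M N) (snd K M N)) (snd K M N) $h)
    · simpa [blockSum, TensorProduct.map_map, ← TensorProduct.map_comp] using
        congr(map (map (snd K M N) (fst K M N)) (snd K M N) $h)
    · simpa [blockSum, TensorProduct.map_map, ← TensorProduct.map_comp] using
        congr(map (map (snd K M N) (snd K M N)) (snd K M N) $h)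
  · rintro ⟨h₁, h₂, h₃, h₄, h₆, h₈⟩
    rw [h₂, h₄, τ₁₃_τ₁₃, τ₁₃_τ₁₃, ← h₁, ← h₃, ← h₆, ← h₈]

end Blocks

section UnifiedCoproduct

variable {A V : Type*} [AddCommGroup A] [Module K A] [AddCommGroup V] [Module K V]
variable (ΔA : A →ₗ[K] A ⊗[K] A) (ΔV : V →ₗ[K] V ⊗[K] V)
variable (ρ : V →ₗ[K] A ⊗[K] V) (γ : V →ₗ[K] V ⊗[K] A) (Q : V →ₗ[K] A ⊗[K] A)

theorem prodComul_comp_inl :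
    prodComul ΔA ΔV 0 0 ρ γ 0 Q ∘ₗ inl K A V = map (inl K A V) (inl K A V) ∘ₗ ΔA := by
  ext a
  simp [prodComul]

theorem prodComul_comp_inr :
    prodComul ΔA ΔV 0 0 ρ γ 0 Q ∘ₗ inr K A V
      = map (inr K A V) (inr K A V) ∘ₗ ΔV + map (inl K A V) (inr K A V) ∘ₗ ρ
        + map (inr K A V) (inl K A V) ∘ₗ γ + map (inl K A V) (inl K A V) ∘ₗ Q := by
  ext x
  simp [prodComul]

theorem coassocDefect_prodComul_inr (x : V) :
    coassocDefect (prodComul ΔA ΔV 0 0 ρ γ 0 Q) (inr K A V x) = blockSum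
      (rTensor A ΔA (Q x) - α K A A A (lTensor A ΔA (Q x))
        + rTensor A Q (γ x) - α K A A A (lTensor A Q (ρ x)))
      (rTensor V ΔA (ρ x) + rTensor V Q (ΔV x) - α K A A V (lTensor A ρ (ρ x)))
      (rTensor A ρ (γ x) - α K A V A (lTensor A γ (ρ x)))
      (rTensor V ρ (ΔV x) - α K A V V (lTensor A ΔV (ρ x)))
      (rTensor A γ (γ x) - α K V A A (lTensor V ΔA (γ x)) - α K V A A (lTensor V Q (ΔV x)))
      (rTensor V γ (ΔV x) - α K V A V (lTensor V ρ (ΔV x)))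
      (rTensor A ΔV (γ x) - α K V V A (lTensor V γ (ΔV x)))
      (rTensor V ΔV (ΔV x) - α K V V V (lTensor V ΔV (ΔV x))) := by
  have hx := LinearMap.congr_fun (prodComul_comp_inr ΔA ΔV ρ γ Q) x
  simp only [LinearMap.comp_apply, LinearMap.add_apply] at hx
  simp only [coassocDefect_apply, blockSum, hx, map_add,
    rTensor_map, lTensor_map, prodComul_comp_inl, prodComul_comp_inr,
    TensorProduct.map_add_left, TensorProduct.map_add_right, LinearMap.add_apply,
    ← map_rTensor, ← map_lTensor, α_map, map_sub]
  abel

end UnifiedCoproduct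

end AntiFlexible

theorem unified_coproduct_c2_iff_general
    (K A V : Type*) [Field K]
    [AddCommGroup A] [Module K A] [AddCommGroup V] [Module K V]
    (ΔA : A →ₗ[K] A ⊗[K] A) (ΔV : V →ₗ[K] V ⊗[K] V)
    (ρ : V →ₗ[K] A ⊗[K] V) (γ : V →ₗ[K] V ⊗[K] A)
    (Q : V →ₗ[K] A ⊗[K] A)
    (hA : IsAFCoalgebra ΔA) :
    IsAFCoalgebra (prodComul ΔA ΔV 0 0 ρ γ 0 Q)
      ↔
      -- (D1)
      ((∀ x : V, rTensor V ρ (ΔV x) - α K A V V (lTensor A ΔV (ρ x))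
        = τ₁₃ K V V A (rTensor A ΔV (γ x) - α K V V A (lTensor V γ (ΔV x)))) ∧
      -- (D2)
      (∀ x : V, rTensor V γ (ΔV x) - α K V A V (lTensor V ρ (ΔV x))
        = τ₁₃ K V A V (rTensor V γ (ΔV x) - α K V A V (lTensor V ρ (ΔV x)))) ∧
      -- (D3)
      (∀ x : V, rTensor V ΔA (ρ x) + rTensor V Q (ΔV x)
          - α K A A V (lTensor A ρ (ρ x))
        = τ₁₃ K V A A (rTensor A γ (γ x) - α K V A A (lTensor V ΔA (γ x))
          - α K V A A (lTensor V Q (ΔV x)))) ∧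
      -- (D4)
      (∀ x : V, rTensor A ρ (γ x) - α K A V A (lTensor A γ (ρ x))
        = τ₁₃ K A V A (rTensor A ρ (γ x) - α K A V A (lTensor A γ (ρ x)))) ∧
      -- (D5)
      (∀ x : V, rTensor A ΔA (Q x) - α K A A A (lTensor A ΔA (Q x))
          + rTensor A Q (γ x) - α K A A A (lTensor A Q (ρ x))
        = τ₁₃ K A A A (rTensor A ΔA (Q x) - α K A A A (lTensor A ΔA (Q x))
          + rTensor A Q (γ x) - α K A A A (lTensor A Q (ρ x)))) ∧
      -- (D6)
      (∀ x : V, rTensor V ΔV (ΔV x) - α K V V V (lTensor V ΔV (ΔV x))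
        = τ₁₃ K V V V (rTensor V ΔV (ΔV x) - α K V V V (lTensor V ΔV (ΔV x)))))
  := by
  rw [isAFCoalgebra_iff_of_comp_inl (prodComul_comp_inl ΔA ΔV ρ γ Q) hA]
  simp only [coassocDefect_prodComul_inr, blockSum_eq_τ₁₃_iff, forall_and]
  constructor
  · rintro ⟨hD5, hD3, hD4, hD1, hD2, hD6⟩
    exact ⟨hD1, hD2, hD3, hD4, hD5, hD6⟩
  · rintro ⟨hD1, hD2, hD3, hD4, hD5, hD6⟩
    exact ⟨hD5, hD3, hD4, hD1, hD2, hD6⟩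

/-- the type (c2) unified coproduct `A #^Q V` is an
anti-flexible coalgebra iff conditions (D1)-(D6) hold. -/
theorem unified_coproduct_c2_iff
    (K A V : Type*) [Field K] [CharZero K]
    [AddCommGroup A] [Module K A] [AddCommGroup V] [Module K V]
    (ΔA : A →ₗ[K] A ⊗[K] A) (ΔV : V →ₗ[K] V ⊗[K] V)
    (ρ : V →ₗ[K] A ⊗[K] V) (γ : V →ₗ[K] V ⊗[K] A)
    (Q : V →ₗ[K] A ⊗[K] A)
    (hA : IsAFCoalgebra ΔA) :
    IsAFCoalgebra (prodComul ΔA ΔV 0 0 ρ γ 0 Q)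
      ↔
      -- (D1)
      ((∀ x : V, rTensor V ρ (ΔV x) - α K A V V (lTensor A ΔV (ρ x))
        = τ₁₃ K V V A (rTensor A ΔV (γ x) - α K V V A (lTensor V γ (ΔV x)))) ∧
      -- (D2)
      (∀ x : V, rTensor V γ (ΔV x) - α K V A V (lTensor V ρ (ΔV x))
        = τ₁₃ K V A V (rTensor V γ (ΔV x) - α K V A V (lTensor V ρ (ΔV x)))) ∧
      -- (D3)
      (∀ x : V, rTensor V ΔA (ρ x) + rTensor V Q (ΔV x)
          - α K A A V (lTensor A ρ (ρ x))
        = τ₁₃ K V A A (rTensor A γ (γ x) - α K V A A (lTensor V ΔA (γ x))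
          - α K V A A (lTensor V Q (ΔV x)))) ∧
      -- (D4)
      (∀ x : V, rTensor A ρ (γ x) - α K A V A (lTensor A γ (ρ x))
        = τ₁₃ K A V A (rTensor A ρ (γ x) - α K A V A (lTensor A γ (ρ x)))) ∧
      -- (D5)
      (∀ x : V, rTensor A ΔA (Q x) - α K A A A (lTensor A ΔA (Q x))
          + rTensor A Q (γ x) - α K A A A (lTensor A Q (ρ x))
        = τ₁₃ K A A A (rTensor A ΔA (Q x) - α K A A A (lTensor A ΔA (Q x))
          + rTensor A Q (γ x) - α K A A A (lTensor A Q (ρ x)))) ∧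
      -- (D6)
      (∀ x : V, rTensor V ΔV (ΔV x) - α K V V V (lTensor V ΔV (ΔV x))
        = τ₁₃ K V V V (rTensor V ΔV (ΔV x) - α K V V V (lTensor V ΔV (ΔV x))))) :=
  unified_coproduct_c2_iff_general K A V ΔA ΔV ρ γ Q hA
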